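/- If A₁, A₂ ∈ Sⁿ are adjacency matrices of non-isomorphic graphs, i.e., there is no permutation matrix Π with A₁ = Π A₂ Πᵀ, then there exists P ∈ Sⁿ such that Θ_P(A₁) ≠ Θ_P(A₂). Hence the elementary convex graph invariants form a complete set of invariants. -/

import Mathlib

/-!
Write `⟨X, Y⟩ = tr (X Y)`; on symmetric matrices this is the Frobenius inner product, and conjugating
both arguments by the same permutation preserves it. Hence `Θ_P(A) = max_σ ⟨P, σ A⟩` is symmetric in
`P` and `A`, and `Θ_A(A) ≥ ⟨A, A⟩`. If `Θ_P(A₁) = Θ_P(A₂)` for `P = A₁` and `P = A₂`, then for a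
permutation `σ` attaining `Θ_{A₁}(A₂)` we get
`⟨A₁, A₁⟩ + ⟨σ A₂, σ A₂⟩ ≤ Θ_{A₁}(A₁) + Θ_{A₂}(A₂) = 2 Θ_{A₁}(A₂) = 2 ⟨A₁, σ A₂⟩`,
i.e. `‖A₁ - σ A₂‖² ≤ 0`, so `A₁ = σ A₂`.
-/

open Matrix

noncomputable def permConj {n : ℕ} (σ : Equiv.Perm (Fin n))
    (A : Matrix (Fin n) (Fin n) ℝ) : Matrix (Fin n) (Fin n) ℝ :=
  (σ.permMatrix ℝ) * A * (σ.permMatrix ℝ)ᵀ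

/-- The elementary convex graph invariant `Θ_P(A) = max_Π tr(P Π A Πᵀ)`. -/
noncomputable def theta {n : ℕ} (P A : Matrix (Fin n) (Fin n) ℝ) : ℝ :=
  (Finset.univ : Finset (Equiv.Perm (Fin n))).sup' Finset.univ_nonempty
    (fun σ => (P * permConj σ A).trace)

theorem Matrix.transpose_permMatrix_mul_self {ι R : Type*} [DecidableEq ι] [Fintype ι]
    [NonAssocSemiring R] (σ : Equiv.Perm ι) :
    (σ.permMatrix R)ᵀ * σ.permMatrix R = 1 := by
  rw [transpose_permMatrix, ← permMatrix_mul, mul_inv_cancel, permMatrix_one]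

theorem Matrix.trace_mul_self_nonneg_of_isSymm {ι : Type*} [Fintype ι] {X : Matrix ι ι ℝ}
    (hX : X.IsSymm) : 0 ≤ (X * X).trace := by
  simpa [conjTranspose_eq_transpose_of_trivial, hX.eq] using
    (posSemidef_conjTranspose_mul_self X).trace_nonneg

theorem Matrix.eq_of_isSymm_of_trace_mul_self_add_le {ι : Type*} [Fintype ι]
    {A C : Matrix ι ι ℝ} (hA : A.IsSymm) (hC : C.IsSymm)
    (h : (A * A).trace + (C * C).trace ≤ 2 * (A * C).trace) : A = C := by
  have hX : (A - C).IsSymm := hA.sub hC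
  have hexpand : ((A - C) * (A - C)).trace =
      (A * A).trace + (C * C).trace - 2 * (A * C).trace := by
    rw [sub_mul, mul_sub, mul_sub, trace_sub, trace_sub, trace_sub, trace_mul_comm C A]
    ring
  have hzero : ((A - C)ᴴ * (A - C)).trace = 0 := by
    rw [conjTranspose_eq_transpose_of_trivial, hX.eq]
    linarith [trace_mul_self_nonneg_of_isSymm hX]
  exact sub_eq_zero.mp (trace_conjTranspose_mul_self_eq_zero_iff.mp hzero)

section permConj

variable {n : ℕ}

theorem Matrix.IsSymm.permConj {A : Matrix (Fin n) (Fin n) ℝ} (hA : A.IsSymm)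
    (σ : Equiv.Perm (Fin n)) : (permConj σ A).IsSymm := by
  simp only [IsSymm, _root_.permConj, transpose_mul, transpose_transpose, hA.eq, Matrix.mul_assoc]

theorem permConj_one (A : Matrix (Fin n) (Fin n) ℝ) : permConj 1 A = A := by
  simp [permConj]

theorem permConj_mul (σ : Equiv.Perm (Fin n)) (A B : Matrix (Fin n) (Fin n) ℝ) :
    permConj σ A * permConj σ B = permConj σ (A * B) := by
  simp only [permConj, Matrix.mul_assoc]
  rw [← Matrix.mul_assoc _ (σ.permMatrix ℝ), transpose_permMatrix_mul_self, Matrix.one_mul]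

theorem trace_permConj (σ : Equiv.Perm (Fin n)) (A : Matrix (Fin n) (Fin n) ℝ) :
    (permConj σ A).trace = A.trace := by
  rw [permConj, trace_mul_cycle, transpose_permMatrix_mul_self, Matrix.one_mul]

theorem trace_mul_permConj (σ : Equiv.Perm (Fin n)) (P A : Matrix (Fin n) (Fin n) ℝ) :
    (P * permConj σ A).trace = (A * permConj σ⁻¹ P).trace := by
  simp only [permConj, transpose_permMatrix, inv_inv, ← Matrix.mul_assoc]
  rw [trace_mul_cycle, trace_mul_cycle, ← Matrix.mul_assoc]

theorem trace_mul_le_theta (P A : Matrix (Fin n) (Fin n) ℝ) : (P * A).trace ≤ theta P A := by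
  have h := Finset.le_sup' (fun σ => (P * permConj σ A).trace) (Finset.mem_univ 1)
  rwa [permConj_one] at h

theorem exists_theta_eq (P A : Matrix (Fin n) (Fin n) ℝ) :
    ∃ σ : Equiv.Perm (Fin n), theta P A = (P * permConj σ A).trace := by
  obtain ⟨σ, -, hσ⟩ := Finset.exists_mem_eq_sup' Finset.univ_nonempty
    (fun σ : Equiv.Perm (Fin n) => (P * permConj σ A).trace)
  exact ⟨σ, hσ⟩

theorem theta_le_theta_swap (P A : Matrix (Fin n) (Fin n) ℝ) : theta P A ≤ theta A P := by
  obtain ⟨σ, hσ⟩ := exists_theta_eq P A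
  rw [hσ, trace_mul_permConj]
  exact Finset.le_sup' (fun τ => (A * permConj τ P).trace) (Finset.mem_univ σ⁻¹)

theorem theta_comm (P A : Matrix (Fin n) (Fin n) ℝ) : theta P A = theta A P :=
  le_antisymm (theta_le_theta_swap P A) (theta_le_theta_swap A P)

theorem exists_eq_permConj_of_theta_eq {A B : Matrix (Fin n) (Fin n) ℝ}
    (hA : A.IsSymm) (hB : B.IsSymm) (hθA : theta A A = theta A B) (hθB : theta B A = theta B B) :
    ∃ σ : Equiv.Perm (Fin n), A = permConj σ B := by
  obtain ⟨σ, hσ⟩ := exists_theta_eq A B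
  refine ⟨σ, eq_of_isSymm_of_trace_mul_self_add_le hA (hB.permConj σ) ?_⟩
  have hAA : (A * A).trace ≤ theta A B := hθA ▸ trace_mul_le_theta A A
  have hBB : (permConj σ B * permConj σ B).trace ≤ theta A B := by
    rw [permConj_mul, trace_permConj, theta_comm A B, hθB]
    exact trace_mul_le_theta B B
  linarith

end permConj

theorem stmt4 (n : ℕ) (A₁ A₂ : Matrix (Fin n) (Fin n) ℝ)
    (h₁ : A₁.IsSymm) (h₂ : A₂.IsSymm)
    (hniso : ¬ ∃ σ : Equiv.Perm (Fin n), A₁ = permConj σ A₂) :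
    ∃ P : Matrix (Fin n) (Fin n) ℝ, P.IsSymm ∧ theta P A₁ ≠ theta P A₂ := by
  by_contra! h
  exact hniso (exists_eq_permConj_of_theta_eq h₁ h₂ (h A₁ h₁) (h A₂ h₂))
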